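/- arXiv:1203.1058 — 5 statements merged into one kernel-verified Lean document; each statement's English description precedes it below -/
import Mathlib

section
/- Let G be a second countable topological group, H a subgroup of G, and ρ₁ : H → G, ρ₂ : ρ₁(H) → G group homomorphisms (not assumed continuous). If each ρᵢ is a pointwise limit of a sequence of inner automorphisms of G restricted to its domain (meaning: for every finite subset F of the domain and every open set U containing the image of F under ρᵢ, some inner automorphism maps F into U), then the composite ρ₂ ∘ ρ₁ : H → G is also a pointwise limit of a sequence of inner automorphisms of G. -/
/-- A (not necessarily continuous) homomorphism `ρ` from a subgroup `H` of a topological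
group `G` into `G` is a pointwise limit of inner automorphisms of `G` if for every finite
subset `F` of `H` and every open set `U` containing `ρ(F)`, some inner automorphism
`x ↦ g x g⁻¹` of `G` maps `F` into `U`. -/
def PointwiseLimitOfInner {G : Type*} [Group G] [TopologicalSpace G]
    (H : Subgroup G) (ρ : H →* G) : Prop :=
  ∀ (F : Finset H) (U : Set G), IsOpen U → (∀ x ∈ F, ρ x ∈ U) →
    ∃ g : G, ∀ x ∈ F, g * (x : G) * g⁻¹ ∈ U

theorem PointwiseLimitOfInner.comp {G : Type*} [Group G] [TopologicalSpace G] [ContinuousMul G]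
    {H : Subgroup G} {ρ₁ : H →* G} {ρ₂ : ρ₁.range →* G}
    (h₂ : PointwiseLimitOfInner ρ₁.range ρ₂) (h₁ : PointwiseLimitOfInner H ρ₁) :
    PointwiseLimitOfInner H (ρ₂.comp ρ₁.rangeRestrict) := by
  classical
  intro F U hU hF
  obtain ⟨g₂, hg₂⟩ := h₂ (F.image ρ₁.rangeRestrict) U hU <|
    Finset.forall_mem_image.2 fun x hx => hF x hx
  -- `g₂⁻¹ U g₂` is an open neighbourhood of `ρ₁(F)`; approximate `ρ₁` inside it.
  obtain ⟨g₁, hg₁⟩ := h₁ F {y | g₂ * y * g₂⁻¹ ∈ U} (hU.preimage (by fun_prop))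
    fun x hx => hg₂ _ (Finset.mem_image_of_mem _ hx)
  exact ⟨g₂ * g₁, fun x hx => by simpa [mul_assoc] using hg₁ x hx⟩

theorem pointwiseLimitOfInner_comp_general {G : Type*} [Group G] [TopologicalSpace G]
    [IsTopologicalGroup G]
    (H : Subgroup G) (ρ₁ : H →* G) (ρ₂ : ρ₁.range →* G)
    (h₁ : PointwiseLimitOfInner H ρ₁)
    (h₂ : PointwiseLimitOfInner ρ₁.range ρ₂) :
    PointwiseLimitOfInner H (ρ₂.comp ρ₁.rangeRestrict) :=
  h₂.comp h₁

/-- Let `G` be a second countable topological group, `H ≤ G` and `ρ₁ : H → G`,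
`ρ₂ : ρ₁(H) → G` group homomorphisms, each of which is a pointwise limit of inner
automorphisms of `G`.  Then the composite `ρ₂ ∘ ρ₁ : H → G` is also a pointwise limit
of inner automorphisms of `G`. -/
theorem pointwiseLimitOfInner_comp {G : Type*} [Group G] [TopologicalSpace G]
    [IsTopologicalGroup G] [SecondCountableTopology G]
    (H : Subgroup G) (ρ₁ : H →* G) (ρ₂ : ρ₁.range →* G)
    (h₁ : PointwiseLimitOfInner H ρ₁)
    (h₂ : PointwiseLimitOfInner ρ₁.range ρ₂) :
    PointwiseLimitOfInner H (ρ₂.comp ρ₁.rangeRestrict) :=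
  pointwiseLimitOfInner_comp_general H ρ₁ ρ₂ h₁ h₂
end

section
/- Let X be a CAT(0) space, G a group acting by isometries on X, and Y a nonempty closed convex G-invariant subset of X such that every point of X is at distance at most D from Y for some constant D. If F is a G-invariant flat (an isometrically embedded Euclidean subspace) in X, then the nearest-point projection π : X → Y restricted to F is an isometry onto its image, and π(F) is a G-invariant flat in Y of the same dimension. -/
/-!
The distance to `Y` is midpoint convex along the flat (CN-inequality) and bounded by `D`, hence
constant, say `c`. For two points of the flat, the midpoint of their projections is then within
`c` of their midpoint, so by uniqueness of nearest points in a convex set it is the projection of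
that midpoint. Along a line of the flat the projections of the integer points thus form a chain of
midpoints, which in a CAT(0) space is geodesic; staying within `c` of the line, it has the same
speed. Equivariance of `π` is again uniqueness of nearest points.

Convexity of `Y` refers to geodesic segments, so these have to be constructed: the distances from
`a` realised by points between `a` and `b` form a closed set that is closed under averages, hence
all of `[0, d(a, b)]`, and points between `a` and `b` are as far apart as their distances to `a`.
-/

/-- `m` is a midpoint of `a` and `b`. -/
def IsMidpoint {X : Type*} [MetricSpace X] (m a b : X) : Prop :=
  dist a m = dist a b / 2 ∧ dist b m = dist a b / 2

/-- A complete metric space is CAT(0) if midpoints exist and the CN-inequality of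
Bruhat–Tits holds. -/
class CAT0Space (X : Type*) [MetricSpace X] : Prop where
  midpoint_exists : ∀ a b : X, ∃ m, IsMidpoint m a b
  cn_ineq : ∀ x a b m : X, IsMidpoint m a b →
    dist x m ^ 2 ≤ (dist x a ^ 2 + dist x b ^ 2) / 2 - dist a b ^ 2 / 4

/-- `γ` is a unit-speed geodesic segment from `a` to `b`, parametrised on `[0, d(a,b)]`. -/
def IsGeodesicSegmentBetween {X : Type*} [MetricSpace X] (γ : ℝ → X) (a b : X) : Prop :=
  γ 0 = a ∧ γ (dist a b) = b ∧
    ∀ s ∈ Set.Icc 0 (dist a b), ∀ t ∈ Set.Icc 0 (dist a b), dist (γ s) (γ t) = |s - t|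

/-- A subset of a metric space is convex if it contains every geodesic segment
between any two of its points. -/
def SetConvex {X : Type*} [MetricSpace X] (S : Set X) : Prop :=
  ∀ a ∈ S, ∀ b ∈ S, ∀ γ : ℝ → X, IsGeodesicSegmentBetween γ a b →
    ∀ t ∈ Set.Icc 0 (dist a b), γ t ∈ S

/-- `F` is a flat of dimension `n`: an isometrically embedded copy of Euclidean `n`-space. -/
def IsFlat {X : Type*} [MetricSpace X] (n : ℕ) (F : Set X) : Prop :=
  ∃ φ : EuclideanSpace ℝ (Fin n) → X, Isometry φ ∧ Set.range φ = F

open Set Filter Topology AffineMap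

theorem Set.Icc_subset_of_isClosed_of_add_div_two_mem {S : Set ℝ} {a b : ℝ} (hS : IsClosed S)
    (ha : a ∈ S) (hb : b ∈ S) (hmid : ∀ s ∈ S, ∀ t ∈ S, (s + t) / 2 ∈ S) : Icc a b ⊆ S := by
  rintro t ⟨hat, htb⟩
  by_contra ht
  have hL : BddAbove (S ∩ Icc a t) := bddAbove_Icc.mono inter_subset_right
  have hR : BddBelow (S ∩ Icc t b) := bddBelow_Icc.mono inter_subset_right
  have hu : sSup (S ∩ Icc a t) ∈ S ∩ Icc a t :=
    (hS.inter isClosed_Icc).csSup_mem ⟨a, ha, le_rfl, hat⟩ hL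
  have hv : sInf (S ∩ Icc t b) ∈ S ∩ Icc t b :=
    (hS.inter isClosed_Icc).csInf_mem ⟨b, hb, htb, le_rfl⟩ hR
  set u := sSup (S ∩ Icc a t)
  set v := sInf (S ∩ Icc t b)
  have hut : u < t := lt_of_le_of_ne hu.2.2 fun h => ht (h ▸ hu.1)
  have htv : t < v := lt_of_le_of_ne hv.2.1 fun h => ht (h ▸ hv.1)
  have hm := hmid u hu.1 v hv.1
  rcases le_total ((u + v) / 2) t with h | h
  · have := le_csSup hL ⟨hm, by linarith [hu.2.1], h⟩
    linarith
  · have := csInf_le hR ⟨hm, h, by linarith [hv.2.2]⟩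
    linarith

theorem nonpos_of_forall_natCast_mul_le {K : Type*} [Field K] [LinearOrder K]
    [IsStrictOrderedRing K] [Archimedean K] {a C : K} (h : ∀ N : ℕ, N * a ≤ C) : a ≤ 0 := by
  by_contra! ha
  obtain ⟨N, hN⟩ := exists_nat_gt (C / a)
  rw [div_lt_iff₀ ha] at hN
  linarith [h N]

theorem midpoint_lineMap_natCast {V P : Type*} [AddCommGroup V] [Module ℝ V] [AddTorsor V P]
    (u v : P) (j : ℕ) :
    midpoint ℝ (lineMap u v (j : ℝ)) (lineMap u v ((j + 2 : ℕ) : ℝ)) =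
      lineMap u v ((j + 1 : ℕ) : ℝ) := by
  rw [← AffineMap.map_midpoint]
  congr 1
  rw [midpoint_eq_smul_add, smul_eq_mul, invOf_eq_inv]
  push_cast
  ring

section Midpoints

variable {X : Type*} [MetricSpace X]

theorem IsMidpoint.symm {m a b : X} (h : IsMidpoint m a b) : IsMidpoint m b a := by
  rw [IsMidpoint, dist_comm b a]
  exact And.symm h

theorem IsMidpoint.dist_add_dist {m a b : X} (h : IsMidpoint m a b) :
    dist a m + dist m b = dist a b := by
  rw [dist_comm m b, h.1, h.2]
  ring

theorem IsGeodesicSegmentBetween.isMidpoint {γ : ℝ → X} {a b : X}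
    (hγ : IsGeodesicSegmentBetween γ a b) : IsMidpoint (γ (dist a b / 2)) a b := by
  obtain ⟨h0, h1, hγ⟩ := hγ
  have hd : 0 ≤ dist a b := dist_nonneg
  have hmem : dist a b / 2 ∈ Icc 0 (dist a b) := ⟨by positivity, by linarith⟩
  have ha := hγ 0 ⟨le_rfl, hd⟩ _ hmem
  have hb := hγ _ ⟨hd, le_rfl⟩ _ hmem
  rw [h0] at ha
  rw [h1] at hb
  constructor
  · rw [ha, zero_sub, abs_neg, abs_of_nonneg (by positivity)]
  · rw [hb, abs_of_nonneg (by linarith)]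
    ring

theorem Isometry.isMidpoint_midpoint {E : Type*} [NormedAddCommGroup E] [NormedSpace ℝ E]
    {φ : E → X} (hφ : Isometry φ) (u v : E) :
    IsMidpoint (φ (midpoint ℝ u v)) (φ u) (φ v) := by
  constructor
  · rw [hφ.dist_eq, hφ.dist_eq, dist_left_midpoint, Real.norm_ofNat]
    ring
  · rw [hφ.dist_eq, hφ.dist_eq, dist_right_midpoint, Real.norm_ofNat]
    ring

end Midpoints

namespace CAT0Space

variable {X : Type*} [MetricSpace X] [CAT0Space X]

/-- If `dist z w` exceeded `|dist a z - dist a w|`, the CN-inequality at the midpoint of `z`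
and `w`, seen from `a` and from `b`, would give a path from `a` to `b` shorter than
`dist a b`. -/
theorem dist_eq_abs_sub_of_dist_add_dist_eq {a b z w : X}
    (hz : dist a z + dist z b = dist a b) (hw : dist a w + dist w b = dist a b) :
    dist z w = |dist a z - dist a w| := by
  obtain ⟨m, hm⟩ := midpoint_exists z w
  have hcn_a := cn_ineq a z w m hm
  have hcn_b := cn_ineq b z w m hm
  have htri := dist_triangle a m b
  rw [dist_comm b z, dist_comm b w, dist_comm b m] at hcn_b
  have hsq : dist z w ^ 2 ≤ (dist a z - dist a w) ^ 2 := by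
    by_contra! h
    have hα : dist a m < (dist a z + dist a w) / 2 := by
      nlinarith [dist_nonneg (x := a) (y := m), dist_nonneg (x := a) (y := z),
        dist_nonneg (x := a) (y := w)]
    nlinarith [dist_nonneg (x := z) (y := b), dist_nonneg (x := w) (y := b),
      dist_nonneg (x := m) (y := b)]
  refine le_antisymm ?_ ?_
  · simpa [abs_of_nonneg dist_nonneg] using sq_le_sq.1 hsq
  · simpa [dist_comm] using abs_dist_sub_le z w a

theorem dist_isMidpoint_of_dist_add_dist_eq {a b z w m : X}
    (hz : dist a z + dist z b = dist a b) (hw : dist a w + dist w b = dist a b)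
    (hm : IsMidpoint m z w) :
    dist a m = (dist a z + dist a w) / 2 ∧ dist a m + dist m b = dist a b := by
  have hzw := dist_eq_abs_sub_of_dist_add_dist_eq hz hw
  have hcn_a := cn_ineq a z w m hm
  have hcn_b := cn_ineq b z w m hm
  have htri := dist_triangle a m b
  rw [dist_comm b z, dist_comm b w, dist_comm b m, hzw, sq_abs] at hcn_b
  rw [hzw, sq_abs] at hcn_a
  have hα : dist a m ≤ (dist a z + dist a w) / 2 := by
    nlinarith [dist_nonneg (x := a) (y := m), dist_nonneg (x := a) (y := z),
      dist_nonneg (x := a) (y := w)]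
  have hβ : dist m b ≤ dist a b - (dist a z + dist a w) / 2 := by
    nlinarith [dist_nonneg (x := z) (y := b), dist_nonneg (x := w) (y := b),
      dist_nonneg (x := m) (y := b)]
  constructor <;> linarith

theorem isClosed_setOf_dist_add_dist_eq [CompleteSpace X] (a b : X) :
    IsClosed {t : ℝ | ∃ z, dist a z = t ∧ dist a z + dist z b = dist a b} := by
  refine IsSeqClosed.isClosed fun t t₀ ht hlim => ?_
  choose z hzt hz using ht
  have hcauchy : CauchySeq z := by
    have := hlim.cauchySeq
    rw [Metric.cauchySeq_iff] at this ⊢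
    intro ε hε
    obtain ⟨N, hN⟩ := this ε hε
    refine ⟨N, fun k hk l hl => ?_⟩
    rw [dist_eq_abs_sub_of_dist_add_dist_eq (hz k) (hz l), hzt, hzt, ← Real.dist_eq]
    exact hN k hk l hl
  obtain ⟨z₀, hz₀⟩ := cauchySeq_tendsto_of_complete hcauchy
  have ha : Tendsto (fun k => dist a (z k)) atTop (𝓝 (dist a z₀)) := tendsto_const_nhds.dist hz₀
  have hb : Tendsto (fun k => dist (z k) b) atTop (𝓝 (dist z₀ b)) := hz₀.dist tendsto_const_nhds
  refine ⟨z₀, tendsto_nhds_unique ha ?_, tendsto_nhds_unique (ha.add hb) ?_⟩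
  · simpa only [hzt] using hlim
  · simp only [hz]
    exact tendsto_const_nhds

theorem exists_isGeodesicSegmentBetween [CompleteSpace X] (a b : X) :
    ∃ γ : ℝ → X, IsGeodesicSegmentBetween γ a b := by
  have hS : Icc 0 (dist a b) ⊆ {t : ℝ | ∃ z, dist a z = t ∧ dist a z + dist z b = dist a b} := by
    refine Icc_subset_of_isClosed_of_add_div_two_mem (isClosed_setOf_dist_add_dist_eq a b)
      ⟨a, dist_self a, by rw [dist_self, zero_add]⟩ ⟨b, rfl, by rw [dist_self, add_zero]⟩ ?_
    rintro _ ⟨z, rfl, hz⟩ _ ⟨w, rfl, hw⟩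
    obtain ⟨m, hm⟩ := midpoint_exists z w
    exact ⟨m, dist_isMidpoint_of_dist_add_dist_eq hz hw hm⟩
  have : Nonempty X := ⟨a⟩
  choose! γ hγt hγ using fun t (ht : t ∈ Icc 0 (dist a b)) => hS ht
  have hd : 0 ≤ dist a b := dist_nonneg
  refine ⟨γ, ?_, ?_, fun s hs t ht => ?_⟩
  · exact (dist_eq_zero.1 (hγt 0 ⟨le_rfl, hd⟩)).symm
  · have := hγ _ ⟨hd, le_rfl⟩
    rw [hγt _ ⟨hd, le_rfl⟩, add_eq_left] at this
    exact dist_eq_zero.1 this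
  · rw [dist_eq_abs_sub_of_dist_add_dist_eq (hγ s hs) (hγ t ht), hγt s hs, hγt t ht]

theorem dist_midpoints_le_of_common_left {m₁ m₂ a b q : X} (h₁ : IsMidpoint m₁ a b)
    (h₂ : IsMidpoint m₂ a q) : dist m₁ m₂ ≤ dist b q / 2 := by
  have hcn₁ := cn_ineq m₂ a b m₁ h₁
  have hcn₂ := cn_ineq b a q m₂ h₂
  rw [dist_comm m₂ a, h₂.1, dist_comm m₂ b, dist_comm m₂ m₁] at hcn₁
  rw [dist_comm b a] at hcn₂
  nlinarith [dist_nonneg (x := m₁) (y := m₂), dist_nonneg (x := b) (y := q)]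

theorem dist_midpoints_le {x₀ x₁ x₂ p₀ m p₂ : X} (hx : IsMidpoint x₁ x₀ x₂)
    (hm : IsMidpoint m p₀ p₂) : dist x₁ m ≤ (dist x₀ p₀ + dist x₂ p₂) / 2 := by
  obtain ⟨c, hc⟩ := midpoint_exists x₀ p₂
  have h₁ := dist_midpoints_le_of_common_left hx hc
  have h₂ := dist_midpoints_le_of_common_left hm.symm hc.symm
  calc dist x₁ m ≤ dist x₁ c + dist c m := dist_triangle _ _ _
    _ ≤ dist x₂ p₂ / 2 + dist p₀ x₀ / 2 := add_le_add h₁ (by rwa [dist_comm])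
    _ = (dist x₀ p₀ + dist x₂ p₂) / 2 := by rw [dist_comm p₀]; ring

theorem dist_eq_add_of_isMidpoint {x m a b : X} (hm : IsMidpoint m a b)
    (h : dist x m = dist x a + dist a m) : dist x b = dist x a + dist a b := by
  have hcn := cn_ineq x a b m hm
  rw [h, hm.1] at hcn
  have hlow : dist x a + dist a b ≤ dist x b := by
    nlinarith [dist_nonneg (x := x) (y := a), dist_nonneg (x := a) (y := b),
      dist_nonneg (x := x) (y := b)]
  exact le_antisymm (dist_triangle x a b) hlow

theorem dist_eq_mul_of_isMidpoint_chain {p : ℕ → X}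
    (hp : ∀ j, IsMidpoint (p (j + 1)) (p j) (p (j + 2))) (j : ℕ) :
    dist (p 0) (p j) = j * dist (p 0) (p 1) := by
  set δ := dist (p 0) (p 1)
  have hstep : ∀ j, dist (p j) (p (j + 1)) = δ := by
    intro j
    induction j with
    | zero => rfl
    | succ j ih => rw [dist_comm, (hp j).2, ← (hp j).1, ih]
  have hpair : ∀ j, dist (p 0) (p j) = j * δ ∧ dist (p 0) (p (j + 1)) = (j + 1) * δ := by
    intro j
    induction j with
    | zero => simp [δ]
    | succ j ih =>
      refine ⟨by rw [ih.2]; push_cast; ring, ?_⟩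
      have h2 : dist (p j) (p (j + 2)) = 2 * δ := by linarith [(hp j).1, hstep j]
      rw [dist_eq_add_of_isMidpoint (hp j) (by rw [ih.1, ih.2, hstep]; ring), ih.1, h2]
      push_cast
      ring
  exact (hpair j).1

end CAT0Space

section ConvexSets

variable {X : Type*} [MetricSpace X] [CAT0Space X]

theorem IsMidpoint.eq {m m' a b : X} (h : IsMidpoint m a b) (h' : IsMidpoint m' a b) :
    m = m' := by
  have := CAT0Space.dist_eq_abs_sub_of_dist_add_dist_eq h.dist_add_dist h'.dist_add_dist
  rw [h.1, h'.1, sub_self, abs_zero] at this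
  exact dist_eq_zero.1 this

theorem SetConvex.isMidpoint_mem [CompleteSpace X] {Y : Set X} (hY : SetConvex Y) {m a b : X}
    (ha : a ∈ Y) (hb : b ∈ Y) (hm : IsMidpoint m a b) : m ∈ Y := by
  obtain ⟨γ, hγ⟩ := CAT0Space.exists_isGeodesicSegmentBetween a b
  rw [hm.eq hγ.isMidpoint]
  exact hY a ha b hb γ hγ _ ⟨by positivity, by linarith [dist_nonneg (x := a) (y := b)]⟩

end ConvexSets

def IsNearestPoint {X : Type*} [MetricSpace X] (Y : Set X) (x p : X) : Prop :=
  p ∈ Y ∧ ∀ y ∈ Y, dist x p ≤ dist x y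

namespace IsNearestPoint

variable {X : Type*} [MetricSpace X] {Y : Set X} {x p : X}

theorem dist_eq_infDist (h : IsNearestPoint Y x p) : dist x p = Metric.infDist x Y :=
  le_antisymm ((Metric.le_infDist ⟨p, h.1⟩).2 h.2) (Metric.infDist_le_dist_of_mem h.1)

theorem smul {G : Type*} [Group G] [MulAction G X] {g : G} (hg : Isometry (fun x : X => g • x))
    (hY : ∀ (g' : G) (y : X), y ∈ Y → g' • y ∈ Y) (h : IsNearestPoint Y x p) :
    IsNearestPoint Y (g • x) (g • p) := by
  refine ⟨hY g p h.1, fun y hy => ?_⟩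
  have := h.2 _ (hY g⁻¹ y hy)
  rwa [← hg.dist_eq x, ← hg.dist_eq x, smul_inv_smul] at this

variable [CAT0Space X] [CompleteSpace X]

theorem eq (hY : SetConvex Y) {q : X} (hp : IsNearestPoint Y x p) (hq : IsNearestPoint Y x q) :
    p = q := by
  obtain ⟨m, hm⟩ := CAT0Space.midpoint_exists p q
  have hcn := CAT0Space.cn_ineq x p q m hm
  have hxm := hp.2 m (hY.isMidpoint_mem hp.1 hq.1 hm)
  have hpq : dist x p = dist x q := le_antisymm (hp.2 q hq.1) (hq.2 p hp.1)
  rw [← hpq] at hcn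
  have : dist p q ^ 2 ≤ 0 := by
    nlinarith [dist_nonneg (x := x) (y := p), dist_nonneg (x := x) (y := m)]
  exact dist_le_zero.1 (by nlinarith [dist_nonneg (x := p) (y := q)])

theorem dist_le_of_isMidpoint (hY : SetConvex Y) {x₀ x₁ x₂ p₀ p₁ p₂ : X}
    (hx : IsMidpoint x₁ x₀ x₂) (h₀ : IsNearestPoint Y x₀ p₀) (h₁ : IsNearestPoint Y x₁ p₁)
    (h₂ : IsNearestPoint Y x₂ p₂) : dist x₁ p₁ ≤ (dist x₀ p₀ + dist x₂ p₂) / 2 := by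
  obtain ⟨m, hm⟩ := CAT0Space.midpoint_exists p₀ p₂
  exact (h₁.2 m (hY.isMidpoint_mem h₀.1 h₂.1 hm)).trans (CAT0Space.dist_midpoints_le hx hm)

/-- The midpoint of `p₀` and `p₂` is as close to `x₁` as `p₁` is, so it is the nearest point. -/
theorem isMidpoint_of_dist_eq (hY : SetConvex Y) {x₀ x₁ x₂ p₀ p₁ p₂ : X}
    (hx : IsMidpoint x₁ x₀ x₂) (h₀ : IsNearestPoint Y x₀ p₀) (h₁ : IsNearestPoint Y x₁ p₁)
    (h₂ : IsNearestPoint Y x₂ p₂) (hd₀ : dist x₀ p₀ = dist x₁ p₁)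
    (hd₂ : dist x₂ p₂ = dist x₁ p₁) : IsMidpoint p₁ p₀ p₂ := by
  obtain ⟨m, hm⟩ := CAT0Space.midpoint_exists p₀ p₂
  have hmY := hY.isMidpoint_mem h₀.1 h₂.1 hm
  have hxm := CAT0Space.dist_midpoints_le hx hm
  rw [hd₀, hd₂, add_self_div_two] at hxm
  have hnear : IsNearestPoint Y x₁ m := ⟨hmY, fun y hy => hxm.trans (h₁.2 y hy)⟩
  rwa [h₁.eq hY hnear]

end IsNearestPoint

section Flats

variable {E : Type*} [NormedAddCommGroup E] [NormedSpace ℝ E]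

/-- Along the line through `u` and `v`, the increments of `f` grow; if `f v > f u` they are
bounded below by `f v - f u > 0`, and `f` is unbounded. -/
theorem eq_of_midpoint_convex_of_bddAbove {f : E → ℝ}
    (hf : ∀ u v, f (midpoint ℝ u v) ≤ (f u + f v) / 2) (hbdd : BddAbove (range f)) (u v : E) :
    f u = f v := by
  suffices h : ∀ u v, f v ≤ f u from le_antisymm (h v u) (h u v)
  intro u v
  obtain ⟨C, hC⟩ := hbdd
  set g : ℕ → ℝ := fun j => f (lineMap u v (j : ℝ))
  have hg0 : g 0 = f u := by simp [g]
  have hg1 : g 1 = f v := by simp [g]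
  have hstep : ∀ j, f v - f u ≤ g (j + 1) - g j := by
    intro j
    induction j with
    | zero => rw [hg0, zero_add, hg1]
    | succ j ih =>
      have := hf (lineMap u v (j : ℝ)) (lineMap u v ((j + 2 : ℕ) : ℝ))
      rw [midpoint_lineMap_natCast] at this
      linarith
  have hgrow : ∀ N : ℕ, N * (f v - f u) ≤ C - f u := by
    intro N
    refine le_trans ?_ (sub_le_sub_right (hC ⟨_, rfl⟩ : g N ≤ C) _)
    induction N with
    | zero => simp [hg0]
    | succ N ih => push_cast; linarith [hstep N]
  linarith [nonpos_of_forall_natCast_mul_le hgrow]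

/-- On the line through `u` and `v`, the images under `ψ` of the integer points form a chain of
midpoints, so the `N`-th lies at distance `N * dist (ψ u) (ψ v)` from `ψ u`; under `φ` it is
`N * dist u v`, and the two differ by at most `2 * c` for every `N`. -/
theorem isometry_of_isMidpoint_of_dist_le {X : Type*} [MetricSpace X] [CAT0Space X]
    {φ ψ : E → X} (hφ : Isometry φ) (hψ : ∀ u v, IsMidpoint (ψ (midpoint ℝ u v)) (ψ u) (ψ v))
    {c : ℝ} (hc : ∀ u, dist (φ u) (ψ u) ≤ c) : Isometry ψ := by
  refine Isometry.of_dist_eq fun u v => ?_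
  set x : ℕ → E := fun j => lineMap u v (j : ℝ)
  have hchain : ∀ j, IsMidpoint (ψ (x (j + 1))) (ψ (x j)) (ψ (x (j + 2))) := fun j => by
    simpa only [x, midpoint_lineMap_natCast] using hψ (x j) (x (j + 2))
  have hx0 : x 0 = u := by simp [x]
  have hx1 : x 1 = v := by simp [x]
  have hψN := CAT0Space.dist_eq_mul_of_isMidpoint_chain hchain
  have hφN : ∀ N : ℕ, dist (φ (x 0)) (φ (x N)) = N * dist u v := fun N => by
    rw [hφ.dist_eq, dist_lineMap_lineMap, Nat.cast_zero, dist_zero_left, Real.norm_natCast]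
  rw [hx0, hx1] at hψN
  rw [hx0] at hφN
  have hbound : ∀ N : ℕ, N * |dist (ψ u) (ψ v) - dist u v| ≤ 2 * c := by
    intro N
    have h₁ := dist_triangle4 (ψ u) (φ u) (φ (x N)) (ψ (x N))
    have h₂ := dist_triangle4 (φ u) (ψ u) (ψ (x N)) (φ (x N))
    rw [hψN, hφN] at h₁ h₂
    rw [← abs_of_nonneg (Nat.cast_nonneg (α := ℝ) N), ← abs_mul, mul_sub, abs_le]
    constructor <;>
      linarith [hc u, hc (x N), dist_comm (ψ u) (φ u), dist_comm (ψ (x N)) (φ (x N))]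
  exact sub_eq_zero.1 (abs_nonpos_iff.1 (nonpos_of_forall_natCast_mul_le hbound))

end Flats

theorem flat_projects_to_flat_general {X G : Type*} [MetricSpace X] [CompleteSpace X] [CAT0Space X]
    [Group G] [MulAction G X] (hiso : ∀ g : G, Isometry (fun x : X => g • x))
    (Y : Set X) (hYconv : SetConvex Y)
    (hYinv : ∀ (g : G) (x : X), x ∈ Y → g • x ∈ Y)
    (D : ℝ) (hD : ∀ x : X, Metric.infDist x Y ≤ D)
    (π : X → X) (hπmem : ∀ x, π x ∈ Y)
    (hπnear : ∀ x, ∀ y ∈ Y, dist x (π x) ≤ dist x y)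
    (n : ℕ) (F : Set X) (hF : IsFlat n F)
    (hFinv : ∀ (g : G) (x : X), x ∈ F → g • x ∈ F) :
    (∀ a ∈ F, ∀ b ∈ F, dist (π a) (π b) = dist a b) ∧
      π '' F ⊆ Y ∧ IsFlat n (π '' F) ∧
      ∀ (g : G) (x : X), x ∈ π '' F → g • x ∈ π '' F := by
  obtain ⟨φ, hφ, rfl⟩ := hF
  have hπ : ∀ x, IsNearestPoint Y x (π x) := fun x => ⟨hπmem x, hπnear x⟩
  have hconst : ∀ u v, dist (φ u) (π (φ u)) = dist (φ v) (π (φ v)) :=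
    eq_of_midpoint_convex_of_bddAbove
      (fun u v => (hπ _).dist_le_of_isMidpoint hYconv (hφ.isMidpoint_midpoint u v) (hπ _) (hπ _))
      ⟨D, by rintro _ ⟨v, rfl⟩; exact (hπ _).dist_eq_infDist.trans_le (hD _)⟩
  have hψ : Isometry (π ∘ φ) :=
    isometry_of_isMidpoint_of_dist_le hφ
      (fun u v => (hπ _).isMidpoint_of_dist_eq hYconv (hφ.isMidpoint_midpoint u v) (hπ _) (hπ _)
        (hconst _ _) (hconst _ _))
      (fun u => (hconst u 0).le)
  refine ⟨?_, ?_, ⟨π ∘ φ, hψ, range_comp π φ⟩, ?_⟩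
  · rintro _ ⟨u, rfl⟩ _ ⟨v, rfl⟩
    exact (hψ.dist_eq u v).trans (hφ.dist_eq u v).symm
  · rintro _ ⟨x, -, rfl⟩
    exact hπmem x
  · rintro g _ ⟨x, hx, rfl⟩
    rw [((hπ x).smul (hiso g) hYinv).eq hYconv (hπ (g • x))]
    exact mem_image_of_mem π (hFinv g x hx)

/-- Let `X` be a complete CAT(0) space with an isometric action of a group `G`, and let
`Y ⊆ X` be a nonempty closed convex `G`-invariant subset of finite coradius (every point
of `X` is at distance at most `D` from `Y`).  If `F` is a `G`-invariant flat in `X` and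
`π` is the nearest-point projection onto `Y`, then `π` restricted to `F` is an isometry
onto its image, and `π(F)` is a `G`-invariant flat in `Y` of the same dimension. -/
theorem flat_projects_to_flat {X G : Type*} [MetricSpace X] [CompleteSpace X] [CAT0Space X]
    [Group G] [MulAction G X] (hiso : ∀ g : G, Isometry (fun x : X => g • x))
    (Y : Set X) (hYne : Y.Nonempty) (hYcl : IsClosed Y) (hYconv : SetConvex Y)
    (hYinv : ∀ (g : G) (x : X), x ∈ Y → g • x ∈ Y)
    (D : ℝ) (hD : ∀ x : X, Metric.infDist x Y ≤ D)
    (π : X → X) (hπmem : ∀ x, π x ∈ Y)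
    (hπnear : ∀ x, ∀ y ∈ Y, dist x (π x) ≤ dist x y)
    (n : ℕ) (F : Set X) (hF : IsFlat n F)
    (hFinv : ∀ (g : G) (x : X), x ∈ F → g • x ∈ F) :
    (∀ a ∈ F, ∀ b ∈ F, dist (π a) (π b) = dist a b) ∧
      π '' F ⊆ Y ∧ IsFlat n (π '' F) ∧
      ∀ (g : G) (x : X), x ∈ π '' F → g • x ∈ π '' F :=
  flat_projects_to_flat_general hiso Y hYconv hYinv D hD π hπmem hπnear n F hF hFinv
end

section
/- Let N be a closed normal subgroup of a locally compact Hausdorff group H. Then the image of the identity component H° in H/N is dense in the identity component (H/N)°. -/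
open Set
open scoped Pointwise

/-!
The closure `K` of the image of `H°` is a closed normal subgroup of `H ⧸ N`, and `(H ⧸ N) ⧸ K`
is the image of `H ⧸ H°` under an open quotient homomorphism. Since `H ⧸ H°` is locally compact
and totally disconnected, van Dantzig's theorem gives it a basis of open subgroups at `1`; open
images inherit such a basis, so the Hausdorff group `(H ⧸ N) ⧸ K` is totally disconnected. Hence
`(H ⧸ N)°` maps to `1` there, i.e. it lies in `K`.
-/

section

variable {G : Type*} [Group G] [TopologicalSpace G] [IsTopologicalGroup G]

instance Subgroup.normal_connectedComponentOfOne :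
    (Subgroup.connectedComponentOfOne G).Normal where
  conj_mem c hc g := by
    show g * c * g⁻¹ ∈ connectedComponent 1
    have := (IsTopologicalGroup.continuous_conj g).image_connectedComponent_subset 1
      (mem_image_of_mem _ hc)
    simpa using this

theorem QuotientGroup.preimage_mk_singleton_connectedComponentOfOne (x : G) :
    (QuotientGroup.mk ⁻¹' {(x : G ⧸ Subgroup.connectedComponentOfOne G)} : Set G) =
      connectedComponent x := by
  rw [← image_singleton, QuotientGroup.preimage_image_mk_eq_mul, singleton_mul, ← mul_one x,
    ← smul_connectedComponent, mul_one]
  rfl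

instance QuotientGroup.totallyDisconnectedSpace_connectedComponentOfOne :
    TotallyDisconnectedSpace (G ⧸ Subgroup.connectedComponentOfOne G) := by
  have hfibers (y : G ⧸ Subgroup.connectedComponentOfOne G) :
      IsConnected (QuotientGroup.mk ⁻¹' {y}) := by
    obtain ⟨x, rfl⟩ := QuotientGroup.mk_surjective y
    rw [QuotientGroup.preimage_mk_singleton_connectedComponentOfOne]
    exact isConnected_connectedComponent
  rw [totallyDisconnectedSpace_iff_connectedComponent_singleton]
  intro y
  obtain ⟨x, rfl⟩ := QuotientGroup.mk_surjective y
  refine preimage_injective.mpr QuotientGroup.mk_surjective ?_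
  rw [(QuotientGroup.isQuotientMap_mk _).isCoinducing.preimage_connectedComponent hfibers,
    QuotientGroup.preimage_mk_singleton_connectedComponentOfOne]

theorem exists_openSubgroup_subset_of_isCompact_of_isOpen {W : Set G} (hWc : IsCompact W)
    (hWo : IsOpen W) (hW1 : (1 : G) ∈ W) : ∃ S : OpenSubgroup G, (S : Set G) ⊆ W := by
  obtain ⟨V, hV, hVW⟩ := compact_open_separated_mul_left hWc hWo subset_rfl
  have hstab : V ∩ V⁻¹ ⊆ MulAction.stabilizer G W := by
    rintro v ⟨hv, hv'⟩
    have h1 : v • W ⊆ W := (smul_set_subset_mul hv).trans hVW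
    have h2 : v⁻¹ • W ⊆ W := (smul_set_subset_mul (mem_inv.mp hv')).trans hVW
    exact h1.antisymm (subset_smul_set_iff.mpr h2)
  refine ⟨⟨MulAction.stabilizer G W, Subgroup.isOpen_of_mem_nhds _
    (Filter.mem_of_superset (Filter.inter_mem hV (inv_mem_nhds_one G hV)) hstab)⟩, fun g hg => ?_⟩
  have hgW : g • W = W := hg
  simpa [hgW] using smul_mem_smul_set (a := g) hW1

/-- Van Dantzig's theorem. -/
theorem NonarchimedeanGroup.of_totallyDisconnectedSpace [LocallyCompactSpace G] [T2Space G]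
    [TotallyDisconnectedSpace G] : NonarchimedeanGroup G where
  is_nonarchimedean U hU := by
    obtain ⟨K, ⟨hK, hKc⟩, hKU⟩ := (compact_basis_nhds (1 : G)).mem_iff.mp hU
    obtain ⟨W, hW, hW1, hWK⟩ := loc_compact_Haus_tot_disc_of_zero_dim.mem_nhds_iff.mp hK
    obtain ⟨S, hSW⟩ := exists_openSubgroup_subset_of_isCompact_of_isOpen
      (hKc.of_isClosed_subset hW.isClosed hWK) hW.isOpen hW1
    exact ⟨S, hSW.trans (hWK.trans hKU)⟩

omit [IsTopologicalGroup G] in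
theorem NonarchimedeanGroup.of_isOpenQuotientMap [NonarchimedeanGroup G] {Q : Type*} [Group Q]
    [TopologicalSpace Q] [IsTopologicalGroup Q] (f : G →* Q) (hf : IsOpenQuotientMap f) :
    NonarchimedeanGroup Q where
  is_nonarchimedean U hU := by
    obtain ⟨S, hS⟩ := NonarchimedeanGroup.is_nonarchimedean _
      (hf.continuous.continuousAt.preimage_mem_nhds (by rwa [map_one]))
    exact ⟨⟨S.map f, hf.isOpenMap _ S.isOpen⟩, image_subset_iff.mpr hS⟩

theorem totallyDisconnectedSpace_of_isOpenQuotientMap [LocallyCompactSpace G] {Q : Type*}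
    [Group Q] [TopologicalSpace Q] [IsTopologicalGroup Q] [T2Space Q] (f : G →* Q)
    (hf : IsOpenQuotientMap f) (hker : Subgroup.connectedComponentOfOne G ≤ f.ker) :
    TotallyDisconnectedSpace Q := by
  have : IsClosed (Subgroup.connectedComponentOfOne G : Set G) := isClosed_connectedComponent
  -- `f` factors through `G ⧸ G°` by an open quotient map.
  have :=
    NonarchimedeanGroup.of_totallyDisconnectedSpace (G := G ⧸ Subgroup.connectedComponentOfOne G)
  have := NonarchimedeanGroup.of_isOpenQuotientMap (QuotientGroup.lift _ f hker)
    ((IsOpenQuotientMap.of_comp_iff QuotientGroup.isOpenQuotientMap_mk).mp hf)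
  infer_instance

end

theorem image_identityComponent_dense_general
    {H : Type*} [Group H] [TopologicalSpace H] [IsTopologicalGroup H]
    [LocallyCompactSpace H]
    (N : Subgroup H) [N.Normal] :
    closure (QuotientGroup.mk '' (connectedComponent (1 : H)) : Set (H ⧸ N)) =
      connectedComponent (1 : H ⧸ N) := by
  refine (closure_minimal ?_ isClosed_connectedComponent).antisymm ?_
  · exact QuotientGroup.continuous_mk.image_connectedComponent_subset (1 : H)
  have : ((Subgroup.connectedComponentOfOne H).map (QuotientGroup.mk' N)).Normal :=
    .map inferInstance _ (QuotientGroup.mk'_surjective N)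
  set K := ((Subgroup.connectedComponentOfOne H).map (QuotientGroup.mk' N)).topologicalClosure
  have : K.Normal := Subgroup.is_normal_topologicalClosure _
  have : IsClosed (K : Set (H ⧸ N)) := Subgroup.isClosed_topologicalClosure _
  have : TotallyDisconnectedSpace ((H ⧸ N) ⧸ K) :=
    totallyDisconnectedSpace_of_isOpenQuotientMap
      ((QuotientGroup.mk' K).comp (QuotientGroup.mk' N))
      (QuotientGroup.isOpenQuotientMap_mk.comp QuotientGroup.isOpenQuotientMap_mk)
      fun c hc => (QuotientGroup.eq_one_iff _).mpr (subset_closure ⟨c, hc, rfl⟩)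
  intro x hx
  have : (x : (H ⧸ N) ⧸ K) ∈ connectedComponent 1 :=
    QuotientGroup.continuous_mk.image_connectedComponent_subset 1 (mem_image_of_mem _ hx)
  exact (by simpa using this : x ∈ K)

/-- Let `N` be a closed normal subgroup of a locally compact Hausdorff group `H`.  Then the
image of the identity component `H°` in `H/N` is dense in the identity component `(H/N)°`;
equivalently, its closure is exactly `(H/N)°`. -/
theorem image_identityComponent_dense
    {H : Type*} [Group H] [TopologicalSpace H] [IsTopologicalGroup H]
    [LocallyCompactSpace H] [T2Space H]
    (N : Subgroup H) [N.Normal] (hNcl : IsClosed (N : Set H)) :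
    closure (QuotientGroup.mk '' (connectedComponent (1 : H)) : Set (H ⧸ N)) =
      connectedComponent (1 : H ⧸ N) :=
  image_identityComponent_dense_general N
end

section
/- Let G be a unimodular locally compact group, H ≤ G a closed subgroup, and (gₙ) a sequence in G such that (i) for every h ∈ H the sequence gₙ h gₙ⁻¹ converges to a fixed compact subgroup K (compacting sequence), and (ii) for every g ∈ G the set {gₙ g gₙ⁻¹ : n ∈ ℕ} is relatively compact. Then H is compact. -/
/-!
If `H` were not compact, it would contain, for every `p`, elements `h₁, …, h_p` whose right
translates `W hᵢ` of a fixed compact set `W` of positive Haar measure are pairwise disjoint.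
Bounded conjugation orbits give such a `W` whose conjugates `gₙ W gₙ⁻¹` all lie in one compact
set `P`: the orbit closures of points of a compact neighbourhood `C` of `1` are each absorbed by
one of countably many compact sets `P m`, so one of the closed sets
`{x ∈ C | ∀ n, gₙ x gₙ⁻¹ ∈ P m}` has positive measure. For `n` large the `gₙ hᵢ gₙ⁻¹` lie in a
compact neighbourhood `D` of `K`, so `gₙ (⋃ᵢ W hᵢ) gₙ⁻¹ ⊆ P D`. Conjugation preserves the Haar
measure of a unimodular group, hence `p μ(W) ≤ μ(P D) < ∞` for every `p`, which is absurd.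
-/

open Filter MeasureTheory Set Topology

open scoped Pointwise

section Topological

variable {G : Type*} [Group G] [TopologicalSpace G] [IsTopologicalGroup G]

lemma exists_subset_mul_of_subset_iUnion {ι : Type*} [Nonempty ι] {Q : ι → Set G}
    (hQ : Directed (· ⊆ ·) Q) {s V : Set G} (hsQ : s ⊆ ⋃ i, Q i) (hs : IsCompact (closure s))
    (hV : IsOpen V) (hV1 : (1 : G) ∈ V) (hVinv : ∀ x ∈ V, x⁻¹ ∈ V) : ∃ i, s ⊆ Q i * V := by
  have hcover : closure s ⊆ ⋃ i, Q i * V :=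
    (closure_subset_mul_right_of_mem_nhds_one_of_inv s (hV.mem_nhds hV1) hVinv).trans
      (iUnion_mul Q V ▸ mul_subset_mul_right hsQ)
  have hdir : Directed (· ⊆ ·) fun i => Q i * V :=
    hQ.mono_comp _ fun _ _ h => mul_subset_mul_right h
  obtain ⟨i, hi⟩ := hs.elim_directed_cover _ (fun _ => hV.mul_left) hcover hdir
  exact ⟨i, subset_closure.trans hi⟩

lemma exists_isCompact_forall_conj_mem {C : Set G} (hC : IsCompact C) (hC1 : C ∈ 𝓝 1)
    (g : ℕ → G) (hbounded : ∀ x : G, IsCompact (closure (range fun n => g n * x * (g n)⁻¹))) :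
    ∃ P : ℕ → Set G, (∀ m, IsCompact (P m)) ∧ ∀ x ∈ C, ∃ m, ∀ n, g n * x * (g n)⁻¹ ∈ P m := by
  set V := interior C ∩ (interior C)⁻¹
  have h1 : (1 : G) ∈ interior C := mem_interior_iff_mem_nhds.2 hC1
  have hV1 : (1 : G) ∈ V := ⟨h1, by simpa using h1⟩
  have hVinv : ∀ x ∈ V, x⁻¹ ∈ V := fun x hx => ⟨hx.2, by simpa using hx.1⟩
  have hVC : V ⊆ C := inter_subset_left.trans interior_subset
  have hconj : ∀ i, Continuous fun x => g i * x * (g i)⁻¹ := fun i => by fun_prop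
  set Q := accumulate fun i => (fun x => g i * x * (g i)⁻¹) '' C
  refine ⟨fun m => Q m * C,
    fun m => (isCompact_accumulate (fun i => hC.image (hconj i)) m).mul hC, fun x hx => ?_⟩
  have horbit : range (fun n => g n * x * (g n)⁻¹) ⊆ ⋃ m, Q m := by
    rintro _ ⟨n, rfl⟩
    exact mem_iUnion.2 ⟨n, subset_accumulate (mem_image_of_mem _ hx)⟩
  obtain ⟨m, hm⟩ := exists_subset_mul_of_subset_iUnion monotone_accumulate.directed_le horbit
    (hbounded x) (isOpen_interior.inter isOpen_interior.inv) hV1 hVinv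
  exact ⟨m, fun n => mul_subset_mul_left hVC (hm ⟨n, rfl⟩)⟩

lemma exists_finset_pairwiseDisjoint_mul_singleton {S W : Set G} (hW : IsCompact W)
    (hS : ∀ E, IsCompact E → ¬ S ⊆ E) (p : ℕ) :
    ∃ t : Finset G, ↑t ⊆ S ∧ t.card = p ∧ (t : Set G).PairwiseDisjoint fun h => W * {h} := by
  classical
  induction p with
  | zero => exact ⟨∅, by simp, rfl, by simp⟩
  | succ p ih =>
    obtain ⟨t, htS, rfl, ht⟩ := ih
    have htc : IsCompact (t : Set G) := t.finite_toSet.isCompact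
    obtain ⟨a, haS, ha⟩ := not_subset.1 (hS _ (((hW.inv.mul hW).mul htc).union htc))
    rw [mem_union, not_or] at ha
    refine ⟨insert a t, ?_, Finset.card_insert_of_notMem ha.2, ?_⟩
    · rw [Finset.coe_insert]
      exact insert_subset haS htS
    · rw [Finset.coe_insert]
      refine ht.insert fun b hb _ => ?_
      rw [mul_singleton, mul_singleton, disjoint_left]
      rintro _ ⟨w, hw, rfl⟩ ⟨w', hw', hx⟩
      exact ha.1 ⟨w⁻¹ * w', ⟨w⁻¹, inv_mem_inv.2 hw, w', hw', rfl⟩, b, hb, by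
        simp only [mul_assoc, hx, inv_mul_cancel_left]⟩

end Topological

section Measure

variable {G : Type*} [Group G] [TopologicalSpace G] [IsTopologicalGroup G] [MeasurableSpace G]
  (μ : Measure G)

lemma exists_measure_pos_forall_conj_mem [LocallyCompactSpace G] [T2Space G]
    [μ.IsOpenPosMeasure] (g : ℕ → G)
    (hbounded : ∀ x : G, IsCompact (closure (range fun n => g n * x * (g n)⁻¹))) :
    ∃ W P : Set G, IsCompact W ∧ 0 < μ W ∧ IsCompact P ∧
      ∀ n, ∀ x ∈ W, g n * x * (g n)⁻¹ ∈ P := by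
  obtain ⟨C, hC, hC1⟩ := exists_compact_mem_nhds (1 : G)
  obtain ⟨P, hP, hCP⟩ := exists_isCompact_forall_conj_mem hC hC1 g hbounded
  set T : ℕ → Set G := fun m => C ∩ ⋂ n, (fun x => g n * x * (g n)⁻¹) ⁻¹' P m
  have hCT : C ⊆ ⋃ m, T m := fun x hx =>
    (hCP x hx).elim fun m hm => mem_iUnion.2 ⟨m, hx, mem_iInter.2 hm⟩
  obtain ⟨m, hm⟩ : ∃ m, 0 < μ (T m) := by
    by_contra! h
    exact (Measure.measure_pos_of_mem_nhds μ hC1).ne'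
      (measure_mono_null hCT (measure_iUnion_null fun m => nonpos_iff_eq_zero.1 (h m)))
  have hT : IsClosed (T m) :=
    hC.isClosed.inter (isClosed_iInter fun n => (hP m).isClosed.preimage (by fun_prop))
  exact ⟨T m, P m, hC.of_isClosed_subset hT inter_subset_left, hm, hP m,
    fun n x hx => mem_iInter.1 hx.2 n⟩

lemma measure_preimage_conj [BorelSpace G] [μ.IsMulLeftInvariant] [μ.IsMulRightInvariant]
    (g : G) (A : Set G) :
    μ ((fun x => g * x * g⁻¹) ⁻¹' A) = μ A := by
  rw [show (fun x => g * x * g⁻¹) = (· * g⁻¹) ∘ (g * ·) from rfl, preimage_comp,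
    measure_preimage_mul, measure_preimage_mul_right]

lemma measure_biUnion_mul_singleton [BorelSpace G] [μ.IsMulRightInvariant] {W : Set G}
    (hW : MeasurableSet W) {t : Finset G} (ht : (t : Set G).PairwiseDisjoint fun h => W * {h}) :
    μ (⋃ h ∈ t, W * {h}) = t.card * μ W := by
  have htrans : ∀ h : G, W * {h} = (· * h⁻¹) ⁻¹' W := fun h => by
    rw [mul_singleton, image_mul_right]
  rw [measure_biUnion_finset ht fun h _ => htrans h ▸ hW.preimage (measurable_mul_const _)]
  simp only [htrans, measure_preimage_mul_right, Finset.sum_const, nsmul_eq_mul]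

end Measure

/-- Let `G` be a unimodular locally compact group (a left Haar measure is also right
invariant), `H ≤ G` a closed subgroup, and `(gₙ)` a sequence in `G` such that
(i) `gₙ h gₙ⁻¹` converges to a fixed compact subgroup `K` uniformly on finite subsets of `H`
(a compacting sequence for `H`), and (ii) for every `g ∈ G` the set
`{gₙ g gₙ⁻¹ : n ∈ ℕ}` is relatively compact.  Then `H` is compact. -/
theorem compact_of_compacting_unimodular
    {G : Type*} [Group G] [TopologicalSpace G] [IsTopologicalGroup G]
    [LocallyCompactSpace G] [T2Space G] [MeasurableSpace G] [BorelSpace G]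
    (μ : Measure G) [μ.IsHaarMeasure] [μ.IsMulRightInvariant]
    (H : Subgroup G) (hHcl : IsClosed (H : Set G))
    (g : ℕ → G) (K : Subgroup G) (hKcpt : IsCompact (K : Set G))
    (hcompacting : ∀ U : Set G, IsOpen U → (K : Set G) ⊆ U → ∀ F : Finset G,
      (F : Set G) ⊆ (H : Set G) → ∀ᶠ n in atTop, ∀ h ∈ F, g n * h * (g n)⁻¹ ∈ U)
    (hbounded : ∀ x : G, IsCompact (closure (Set.range fun n => g n * x * (g n)⁻¹))) :
    IsCompact (H : Set G) := by
  by_contra hH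
  have hHE : ∀ E, IsCompact E → ¬ (H : Set G) ⊆ E := fun E hE hHE =>
    hH (hE.of_isClosed_subset hHcl hHE)
  obtain ⟨W, P, hW, hWpos, hP, hWP⟩ := exists_measure_pos_forall_conj_mem μ g hbounded
  obtain ⟨D, hD, hKD⟩ := exists_compact_superset hKcpt
  obtain ⟨p, hp⟩ : ∃ p : ℕ, μ (P * D) < p * μ W :=
    ENNReal.exists_nat_mul_gt hWpos.ne' (hP.mul hD).measure_lt_top.ne
  obtain ⟨t, htH, rfl, ht⟩ := exists_finset_pairwiseDisjoint_mul_singleton hW hHE p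
  obtain ⟨n, hn⟩ := (hcompacting _ isOpen_interior hKD t htH).exists
  have hconj : ⋃ h ∈ t, W * {h} ⊆ (fun x => g n * x * (g n)⁻¹) ⁻¹' (P * D) := by
    simp only [iUnion_subset_iff, mul_singleton]
    rintro h hh _ ⟨w, hw, rfl⟩
    exact ⟨_, hWP n w hw, _, interior_subset (hn h hh), by group⟩
  refine hp.not_ge ?_
  calc t.card * μ W = μ (⋃ h ∈ t, W * {h}) :=
        (measure_biUnion_mul_singleton μ hW.isClosed.measurableSet ht).symm
    _ ≤ μ (P * D) := (measure_mono hconj).trans (measure_preimage_conj μ _ _).le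
end

section
/- Let G be a σ-compact locally compact Hausdorff group, (gₙ) a sequence in G such that for each g ∈ G the set {gₙ g gₙ⁻¹ : n} is relatively compact, and U ⊆ G a nonempty relatively compact open set. Then the union ⋃ₙ gₙ U gₙ⁻¹ is relatively compact. -/
/-!
Exhaust `G` by countably many compact sets `Kₘ`. The closed sets `{x | gₙ x gₙ⁻¹ ∈ closure Kₘ for all n}`
cover `G`, so by Baire one of them has nonempty interior `W`. Finitely many left translates of `W`
cover the compact set `closure U`, and conjugation maps `x⁻¹ W` into `{gₙ x⁻¹ gₙ⁻¹} · closure Kₘ`,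
a product of two relatively compact sets.
-/

open scoped Pointwise
open Set

section ConjBounded

variable {G ι : Type*} [Group G]

theorem iUnion_image_conj_subset_of_subset_preimage_mul (g : ι → G) {t S W K : Set G}
    (hS : S ⊆ ⋃ x ∈ t, (x * ·) ⁻¹' W) (hW : ∀ w ∈ W, ∀ i, g i * w * (g i)⁻¹ ∈ K) :
    ⋃ i, (fun x => g i * x * (g i)⁻¹) '' S ⊆
      ⋃ x ∈ t, range (fun i => g i * x⁻¹ * (g i)⁻¹) * K := by
  rintro _ ⟨_, ⟨i, rfl⟩, u, hu, rfl⟩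
  obtain ⟨x, hx, hxu⟩ := mem_iUnion₂.1 (hS hu)
  refine mem_biUnion hx ⟨_, mem_range_self i, _, hW _ hxu i, ?_⟩
  group

variable [TopologicalSpace G] [IsTopologicalGroup G]

theorem isClosed_setOf_forall_conj_mem (g : ι → G) {C : Set G} (hC : IsClosed C) :
    IsClosed {x | ∀ i, g i * x * (g i)⁻¹ ∈ C} := by
  simp only [ofPred_forall]
  exact isClosed_iInter fun i => hC.preimage (by fun_prop)

theorem exists_isCompact_interior_setOf_forall_conj_mem_nonempty
    [LocallyCompactSpace G] [SigmaCompactSpace G] (g : ι → G)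
    (hbounded : ∀ x : G, IsCompact (closure (range fun i => g i * x * (g i)⁻¹))) :
    ∃ K, IsCompact K ∧ (interior {x | ∀ i, g i * x * (g i)⁻¹ ∈ K}).Nonempty := by
  let K := CompactExhaustion.choice G
  -- Without separation, `K m` need not be closed; its closure is still compact since `G` is regular.
  have hcover : ⋃ m, {x | ∀ i, g i * x * (g i)⁻¹ ∈ closure (K m)} = univ := by
    refine iUnion_eq_univ_iff.2 fun x => ?_
    obtain ⟨m, hm⟩ := K.exists_superset_of_isCompact (hbounded x)
    exact ⟨m, fun i => subset_closure (hm (subset_closure (mem_range_self i)))⟩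
  obtain ⟨m, hm⟩ := nonempty_interior_of_iUnion_of_closed
    (fun m => isClosed_setOf_forall_conj_mem g isClosed_closure) hcover
  exact ⟨_, (K.isCompact m).closure, hm⟩

end ConjBounded

theorem iUnion_conj_relatively_compact_general
    {G : Type*} [Group G] [TopologicalSpace G] [IsTopologicalGroup G]
    [LocallyCompactSpace G] [SigmaCompactSpace G]
    (g : ℕ → G)
    (hbounded : ∀ x : G, IsCompact (closure (Set.range fun n => g n * x * (g n)⁻¹)))
    (U : Set G) (hUcpt : IsCompact (closure U)) :
    IsCompact (closure (⋃ n, (fun x => g n * x * (g n)⁻¹) '' U)) := by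
  obtain ⟨K, hK, hW⟩ := exists_isCompact_interior_setOf_forall_conj_mem_nonempty g hbounded
  obtain ⟨t, ht⟩ := compact_covered_by_mul_left_translates hUcpt hW
  have hcompact : IsCompact (⋃ x ∈ t, closure (range fun n => g n * x⁻¹ * (g n)⁻¹) * K) :=
    t.finite_toSet.isCompact_biUnion fun x _ => (hbounded x⁻¹).mul hK
  refine hcompact.closure_of_subset ?_
  calc ⋃ n, (fun x => g n * x * (g n)⁻¹) '' U
      ⊆ ⋃ x ∈ t, range (fun n => g n * x⁻¹ * (g n)⁻¹) * K :=
        iUnion_image_conj_subset_of_subset_preimage_mul g (subset_closure.trans ht) fun _ hw => hw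
    _ ⊆ _ := by gcongr; exact subset_closure

/-- Let `G` be a σ-compact locally compact Hausdorff group, `(gₙ)` a sequence in `G` such
that for each `g ∈ G` the set `{gₙ g gₙ⁻¹ : n}` is relatively compact, and `U ⊆ G` a
nonempty relatively compact open set.  Then `⋃ₙ gₙ U gₙ⁻¹` is relatively compact. -/
theorem iUnion_conj_relatively_compact
    {G : Type*} [Group G] [TopologicalSpace G] [IsTopologicalGroup G]
    [LocallyCompactSpace G] [T2Space G] [SigmaCompactSpace G]
    (g : ℕ → G)
    (hbounded : ∀ x : G, IsCompact (closure (Set.range fun n => g n * x * (g n)⁻¹)))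
    (U : Set G) (hUne : U.Nonempty) (hUopen : IsOpen U) (hUcpt : IsCompact (closure U)) :
    IsCompact (closure (⋃ n, (fun x => g n * x * (g n)⁻¹) '' U)) :=
  iUnion_conj_relatively_compact_general g hbounded U hUcpt
end
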